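/- Let T > 0 and η > 0. Then, as τ → ∞, √τ · e^{√τ(√τ T − η)} · (H₊(√τ; √τ T, η) + H₋(√τ; √τ T, η)) = η + O(τ^{-1/2}); that is, there exist constants C > 0 and τ₀ > 0 such that for all τ ≥ τ₀ one has |√τ · e^{√τ(√τ T − η)} · (H₊(√τ; √τ T, η) + H₋(√τ; √τ T, η)) − η| ≤ C τ^{-1/2}. -/
import Mathlib


/-- The cubic polynomial `f_τ(ξ)` (with parameters `τ, T, η`). -/
noncomputable def fPoly (τ T η ξ : ℝ) : ℝ :=
  (τ / 6) * ξ ^ 3 + (1 - (τ / 4) * (η + 2 * T)) * ξ ^ 2 +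
    ((1 / 2) * τ * T * (η + T) - (η + 2 * T) + 2 / τ) * ξ +
    ((τ / 12) * (η - 2 * T) * (η + T) ^ 2 + T * (η + T) - (η + 2 * T) / τ + 2 / τ ^ 2)

/-- The cubic polynomial `g_τ(ξ)` (with parameters `τ, T, η`). -/
noncomputable def gPoly (τ T η ξ : ℝ) : ℝ :=
  -(τ / 6) * ξ ^ 3 - (1 + (τ / 4) * (η - 2 * T)) * ξ ^ 2 +
    ((1 / 2) * τ * T * (η - T) - (η - 2 * T) - 2 / τ) * ξ +
    ((τ / 12) * (η + 2 * T) * (η - T) ^ 2 + T * (η - T) - (η - 2 * T) / τ - 2 / τ ^ 2)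

/-- `H₊(τ;T,η) = f_τ(T) e^{-τT} − f_τ(T+η) e^{-τ(T+η)}`. -/
noncomputable def Hplus (τ T η : ℝ) : ℝ :=
  fPoly τ T η T * Real.exp (-(τ * T)) - fPoly τ T η (T + η) * Real.exp (-(τ * (T + η)))

/-- `H₋(τ;T,η) = g_τ(T−η) e^{-τ(T−η)} − g_τ(T) e^{-τT}`. -/
noncomputable def Hminus (τ T η : ℝ) : ℝ :=
  gPoly τ T η (T - η) * Real.exp (-(τ * (T - η))) - gPoly τ T η T * Real.exp (-(τ * T))

set_option maxHeartbeats 1000000 in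
/-- for `T > 0`, `η > 0`, as `τ → ∞`,
`√τ e^{√τ(√τ T − η)} (H₊(√τ; √τ T, η) + H₋(√τ; √τ T, η)) = η + O(τ^{-1/2})`. -/
theorem H_asymptotics (T η : ℝ) (hT : 0 < T) (hη : 0 < η) :
    ∃ C > (0 : ℝ), ∃ τ₀ > (0 : ℝ), ∀ τ ≥ τ₀,
      |Real.sqrt τ * Real.exp (Real.sqrt τ * (Real.sqrt τ * T - η)) *
          (Hplus (Real.sqrt τ) (Real.sqrt τ * T) η + Hminus (Real.sqrt τ) (Real.sqrt τ * T) η)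
        - η| ≤ C * τ ^ (-(1 : ℝ) / 2) := by
  refine ⟨3, by norm_num, 1, by norm_num, fun τ hτ => ?_⟩
  have hτ0 : (0 : ℝ) < τ := by linarith
  set s := Real.sqrt τ with hs
  have hs1 : (1 : ℝ) ≤ s := by
    rw [hs, show (1:ℝ) = Real.sqrt 1 by rw [Real.sqrt_one]]
    exact Real.sqrt_le_sqrt hτ
  have hs0 : (0 : ℝ) < s := by linarith
  clear_value s
  -- rewrite the power
  have hpow : τ ^ (-(1 : ℝ) / 2) = s⁻¹ := by
    rw [show (-(1:ℝ)/2) = -(1/2) by ring, Real.rpow_neg hτ0.le, ← Real.sqrt_eq_rpow, ← hs]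
  rw [hpow]
  -- the key identity
  have e1 : Real.exp (s * (s * T - η)) * Real.exp (-(s * (s * T))) =
      Real.exp (-(s * η)) := by
    rw [← Real.exp_add]; ring_nf
  have e2 : Real.exp (s * (s * T - η)) * Real.exp (-(s * (s * T + η))) =
      Real.exp (-(2 * (s * η))) := by
    rw [← Real.exp_add]; ring_nf
  have e3 : Real.exp (s * (s * T - η)) * Real.exp (-(s * (s * T - η))) = 1 := by
    rw [← Real.exp_add]; simp
  set u := Real.exp (-(s * η)) with hu
  set v := Real.exp (-(2 * (s * η))) with hv
  have key : s * Real.exp (s * (s * T - η)) *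
      (Hplus s (s * T) η + Hminus s (s * T) η)
      = (η - 2 / s) + (4 / s) * u - (2 / s + η) * v := by
    have step : s * Real.exp (s * (s * T - η)) *
        (Hplus s (s * T) η + Hminus s (s * T) η)
        = s * (fPoly s (s * T) η (s * T) *
              (Real.exp (s * (s * T - η)) * Real.exp (-(s * (s * T))))
            - fPoly s (s * T) η (s * T + η) *
              (Real.exp (s * (s * T - η)) * Real.exp (-(s * (s * T + η))))
            + gPoly s (s * T) η (s * T - η) *
              (Real.exp (s * (s * T - η)) * Real.exp (-(s * (s * T - η))))
            - gPoly s (s * T) η (s * T) *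
              (Real.exp (s * (s * T - η)) * Real.exp (-(s * (s * T))))) := by
      unfold Hplus Hminus; ring
    rw [step, e1, e2, e3]
    have hsne : s ≠ 0 := ne_of_gt hs0
    have p1 : s * gPoly s (s * T) η (s * T - η) = η - 2 / s := by
      unfold gPoly; field_simp; ring
    have p2 : s * (fPoly s (s * T) η (s * T) - gPoly s (s * T) η (s * T)) = 4 / s := by
      unfold fPoly gPoly; field_simp; ring
    have p3 : s * fPoly s (s * T) η (s * T + η) = 2 / s + η := by
      unfold fPoly; field_simp; ring
    linear_combination p1 + u * p2 - v * p3
  rw [key]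
  -- bounds on u and v
  have hu0 : 0 < u := Real.exp_pos _
  have hu1 : u ≤ 1 := Real.exp_le_one_iff.mpr (by nlinarith)
  have hvu : v = u ^ 2 := by
    rw [hv, hu, sq, ← Real.exp_add]; ring_nf
  have hv0 : 0 < v := Real.exp_pos _
  have hvb : v * (2 * (s * η)) ≤ 1 := by
    have h1 : 2 * (s * η) ≤ Real.exp (2 * (s * η)) := by
      nlinarith [Real.add_one_le_exp (2 * (s * η))]
    have h2 : v * Real.exp (2 * (s * η)) = 1 := by
      rw [hv, ← Real.exp_add]; simp
    nlinarith
  clear_value u v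
  have hηv : η * v ≤ 1 / (2 * s) := by
    rw [le_div_iff₀ (by positivity : (0:ℝ) < 2 * s)]
    nlinarith
  have expand : (η - 2 / s) + (4 / s) * u - (2 / s + η) * v - η
      = -((2 / s) * (1 - u) ^ 2) - η * v := by
    rw [hvu]; ring
  have hA : 0 ≤ (2 / s) * (1 - u) ^ 2 := by positivity
  have hA' : (2 / s) * (1 - u) ^ 2 ≤ 2 / s := by
    have : (1 - u) ^ 2 ≤ 1 := by nlinarith
    have h2s : 0 < 2 / s := by positivity
    nlinarith
  have hB : 0 ≤ η * v := by positivity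
  have hfin : 2 / s + 1 / (2 * s) ≤ 3 * s⁻¹ := by
    rw [show (3:ℝ) * s⁻¹ = 3 / s from by rw [div_eq_mul_inv],
      div_add_div _ _ (ne_of_gt hs0) (by positivity : (2:ℝ) * s ≠ 0),
      div_le_div_iff₀ (by positivity) hs0]
    nlinarith
  rw [abs_le]
  constructor
  · linarith [expand, hA', hηv, hfin]
  · have h3 : 0 < 3 * s⁻¹ := by positivity
    linarith [expand]
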